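/- Let p/q = [a_1,…,a_n] be an irreducible fraction with 0 < p/q < 1 such that p/q ≡ 1/1 or 0/1 (mod 2), i.e. p and q are both odd, or p is even and q is odd. Then t_n = +1 if the left vertex of the top triangle T_N of AT(p/q) has label ≡ 1/0 (mod 2), and t_n = −1 if the right vertex of the top triangle T_N has label ≡ 1/0 (mod 2). -/

import Mathlib

/-!
Ancestral triangles of continued fractions (Yamada / Farey diagrams),
following "Cluster variables and Alexander polynomials of 2-bridge knots".
-/

noncomputable section

open scoped BigOperators

attribute [local instance] Classical.propDecidable

namespace TwoBridge

/-- The continued fraction `[a₁,…,aₙ] = 1/(a₁ + 1/(a₂ + ⋯ + 1/aₙ))`. -/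
def cf : List ℕ → ℚ
  | [] => 0
  | a :: t => 1 / ((a : ℚ) + cf t)

/-- Partial sums `l_k = a₁ + ⋯ + a_k`. -/
def ell (a : List ℕ) (k : ℕ) : ℕ := (a.take k).sum

/-- The index of the fan containing the `i`-th triangle (1-based): the least `k` with
`i ≤ l_k − 1`.  Fan 1 consists of `T_1, …, T_{a₁−1}` and, for `k ≥ 2`, fan `k` consists of
`T_{l_{k−1}}, …, T_{l_k − 1}`. -/
def fanIdx (a : List ℕ) (i : ℕ) : ℕ := sInf {k | i < ell a k}

/-- The `i`-th triangle (1-based) of the ancestral triangle of `[a₁,…,aₙ]` is a *right*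
triangle iff it lies in an odd-indexed fan (first `a₁ − 1` triangles are right, the next
`a₂` left, the next `a₃` right, and so on alternately). -/
def isRight (a : List ℕ) (i : ℕ) : Prop := Odd (fanIdx a i)

/-- Vertex indices of the ancestral triangle: `0 ↦ 0/1`, `1 ↦ 1/1`, and `j + 1 ↦` the apex
(new vertex) of the triangle `T_j`.  `edgeIdx a i` is the pair of vertex indices
(left endpoint, right endpoint) of the most recently created edge after stacking `i`
triangles; the triangle `T_{i+1}` is stacked on this edge. -/
def edgeIdx (a : List ℕ) : ℕ → ℕ × ℕ
  | 0 => (0, 1)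
  | i + 1 => if isRight a (i + 1) then ((edgeIdx a i).1, i + 2) else (i + 2, (edgeIdx a i).2)

/-- The labels (numerator, denominator) of the endpoints of the active edge after stacking
`i` triangles; the new vertex of each triangle is labelled by the mediant of the two
endpoints of the edge it is stacked on. -/
def edgeLbl (a : List ℕ) : ℕ → (ℕ × ℕ) × (ℕ × ℕ)
  | 0 => ((0, 1), (1, 1))
  | i + 1 =>
      if isRight a (i + 1) then
        ((edgeLbl a i).1,
          ((edgeLbl a i).1.1 + (edgeLbl a i).2.1, (edgeLbl a i).1.2 + (edgeLbl a i).2.2))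
      else
        (((edgeLbl a i).1.1 + (edgeLbl a i).2.1, (edgeLbl a i).1.2 + (edgeLbl a i).2.2),
          (edgeLbl a i).2)

/-- The label (numerator, denominator) of the vertex with index `v`. -/
def vtxLabel (a : List ℕ) (v : ℕ) : ℕ × ℕ :=
  if v = 0 then (0, 1)
  else if v = 1 then (1, 1)
  else ((edgeLbl a (v - 2)).1.1 + (edgeLbl a (v - 2)).2.1,
        (edgeLbl a (v - 2)).1.2 + (edgeLbl a (v - 2)).2.2)

/-- `u` and `w` are joined by an edge of the ancestral triangle. -/
def IsEdgeAT (a : List ℕ) (u w : ℕ) : Prop :=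
  (u = 0 ∧ w = 1) ∨ (u = 1 ∧ w = 0) ∨
    (2 ≤ u ∧ (w = (edgeIdx a (u - 2)).1 ∨ w = (edgeIdx a (u - 2)).2)) ∨
    (2 ≤ w ∧ (u = (edgeIdx a (w - 2)).1 ∨ u = (edgeIdx a (w - 2)).2))

/-- A step of a path: an edge of the ancestral triangle along which the denominator of the
vertex label strictly decreases. -/
def IsStep (a : List ℕ) (u w : ℕ) : Prop :=
  IsEdgeAT a u w ∧ (vtxLabel a w).2 < (vtxLabel a u).2

/-- `IsPathFrom a s γ` : `γ` is a path of the ancestral triangle of `a` starting at the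
vertex with index `s` and ending at `0/1` or `1/1`, the denominator of the label strictly
decreasing along every edge. -/
def IsPathFrom (a : List ℕ) (s : ℕ) (γ : List ℕ) : Prop :=
  γ.head? = some s ∧ (γ.getLast? = some 0 ∨ γ.getLast? = some 1) ∧ List.Chain' (IsStep a) γ

/-- The (indices of the) triangles cut off to the left of the path by a single step from
vertex `u` down to vertex `w`. -/
def stepLeft (a : List ℕ) (u w : ℕ) : Finset ℕ :=
  if 2 ≤ u ∧ w = (edgeIdx a (u - 2)).2 then Finset.Ioc (w - 1) (u - 1) else ∅

/-- The set `S_γ` of (indices of) triangles lying on the left side of the path `γ`. -/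
def pathLeftSet (a : List ℕ) (γ : List ℕ) : Finset ℕ :=
  (γ.zip γ.tail).foldr (fun p s => stepLeft a p.1 p.2 ∪ s) ∅


/-- The unordered edge `{x, y}` is traversed by the path `γ`. -/
def onPath (γ : List ℕ) (x y : ℕ) : Prop :=
  (x, y) ∈ γ.zip γ.tail ∨ (y, x) ∈ γ.zip γ.tail

/-- The three sides of the triangle `T_m` (apex index `m + 1`, base `edgeIdx a (m−1)`). -/
def triSides (a : List ℕ) (m : ℕ) : List (ℕ × ℕ) :=
  [(m + 1, (edgeIdx a (m - 1)).1), (m + 1, (edgeIdx a (m - 1)).2),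
    ((edgeIdx a (m - 1)).1, (edgeIdx a (m - 1)).2)]

/-- The path `γ` does not go along two sides of the same triangle. -/
def NoTwoSides (a γ : List ℕ) : Prop :=
  ∀ m, 1 ≤ m → m ≤ a.sum - 1 →
    ¬ ∃ e₁ ∈ triSides a m, ∃ e₂ ∈ triSides a m,
        e₁ ≠ e₂ ∧ onPath γ e₁.1 e₁.2 ∧ onPath γ e₂.1 e₂.2

/-- The label of a vertex reduced modulo 2 (so each label becomes `0/1`, `1/1` or `1/0`). -/
def par2 (a : List ℕ) (v : ℕ) : ℕ × ℕ := ((vtxLabel a v).1 % 2, (vtxLabel a v).2 % 2)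

/-- The parity condition on the edges of the Seifert path: if `p/q ≡ 1/1 (mod 2)` it uses
only edges joining a vertex `≡ 1/1` to a vertex `≡ 1/0`; otherwise it uses only edges
joining a vertex `≡ 0/1` to a vertex `≡ 1/0`.  (The top vertex, labeled `p/q`, has index
`a.sum`.) -/
def SeifertParity (a γ : List ℕ) : Prop :=
  if par2 a a.sum = (1, 1) then
    List.Chain'
      (fun u w => (par2 a u = (1, 1) ∧ par2 a w = (1, 0)) ∨
        (par2 a u = (1, 0) ∧ par2 a w = (1, 1))) γ
  else
    List.Chain'
      (fun u w => (par2 a u = (0, 1) ∧ par2 a w = (1, 0)) ∨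
        (par2 a u = (1, 0) ∧ par2 a w = (0, 1))) γ

/-- `γ` is the Seifert path of the ancestral triangle of `a`: a path from the top vertex
that never goes along two sides of the same triangle and satisfies the parity condition. -/
def IsSeifert (a γ : List ℕ) : Prop :=
  IsPathFrom a a.sum γ ∧ NoTwoSides a γ ∧ SeifertParity a γ

/-- The bottom edge of `Fan_k` (`k ≥ 2`), i.e. the edge shared by `Fan_k` and `Fan_{k−1}`
(the base edge of the first triangle `T_{l_{k−1}}` of `Fan_k`), lies on the path `γ`. -/
def bottomEdgeOn (a γ : List ℕ) (k : ℕ) : Prop :=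
  onPath γ (edgeIdx a ((a.take (k - 1)).sum - 1)).1
    (edgeIdx a ((a.take (k - 1)).sum - 1)).2

/-- The signs `t_k ∈ {±1}` computed from the Seifert path `γ`:
`t₁ = +1` if `p/q ≡ 1/0` or `0/1 (mod 2)` and `t₁ = −1` if `p/q ≡ 1/1 (mod 2)`; and for
`2 ≤ k`, `t_k = −t_{k−1}` if the bottom edge of `Fan_k` lies on `γ`, `t_k = t_{k−1}`
otherwise. -/
def tsgn (a γ : List ℕ) : ℕ → ℤ
  | 0 => 1
  | 1 => if par2 a a.sum = (1, 1) then -1 else 1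
  | k + 2 => (if bottomEdgeOn a γ (k + 2) then -1 else 1) * tsgn a γ (k + 1)

/-- `Fan_k` lies on the left side of the path `γ`. -/
def FanLeft (a γ : List ℕ) (k : ℕ) : Prop :=
  ∀ j, 1 ≤ j → j ≤ a.sum - 1 → fanIdx a j = k → j ∈ pathLeftSet a γ

/-- The position of the triangle `T_j` inside its fan, counted from the bottom
(so `T_j = T_i^{(k)}` with `k = fanIdx a j` and `i = posInFan a j`). -/
def posInFan (a : List ℕ) (j : ℕ) : ℕ :=
  if fanIdx a j = 1 then j else j - (a.take (fanIdx a j - 1)).sum + 1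

/-- The sign `e_i = e(T_i^{(k)})` of a triangle, computed from the Seifert path `γ`:
`(−1)^i` if the bottom edge of `Fan_k` lies on `γ`; otherwise, for `k` odd, `+1` if
`Fan_k` is on the left side of `γ` and `(−1)^{i−1}` if on the right side, and for `k`
even, `+1` if `Fan_k` is on the right side and `(−1)^{i−1}` if on the left side. -/
def esgn (a γ : List ℕ) (j : ℕ) : ℤ :=
  if bottomEdgeOn a γ (fanIdx a j) then (-1) ^ posInFan a j
  else if Odd (fanIdx a j) then
    (if FanLeft a γ (fanIdx a j) then 1 else (-1) ^ (posInFan a j - 1))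
  else (if FanLeft a γ (fanIdx a j) then (-1) ^ (posInFan a j - 1) else 1)

/-- The quantity `d(k)` (taking the first applicable case): `a_k − 1` if `k` is odd and
`t_k = −1` or `k` is even and `t_k = +1`; `t_k` if the bottom edge of `Fan_k` lies on the
Seifert path; and `1` otherwise. -/
def dval (a γ : List ℕ) (k : ℕ) : ℤ :=
  if (Odd k ∧ tsgn a γ k = -1) ∨ (Even k ∧ tsgn a γ k = 1) then (a.getD (k - 1) 0 : ℤ) - 1
  else if bottomEdgeOn a γ k then tsgn a γ k
  else 1

/-- `Σ_{k=1}^n d(k)`, so that `d = −(1/2) · dsum`. -/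
def dsum (a γ : List ℕ) : ℤ := ∑ k ∈ Finset.Icc 1 a.length, dval a γ k

/-!
Two labels joined by an edge have determinant `±1` and the apex of a triangle is their mediant,
so the three vertices of every triangle represent the three nonzero classes mod 2. The Seifert
path avoids one of them (`excludedClass`), hence from each apex exactly one way down is allowed.
Following these forced steps, the path passes through every allowed fan top `ell a j`, and the
bottom edge of `Fan_k` lies on it exactly when both its endpoints `ell a (k - 1)` and
`ell a (k - 2)` are allowed. As two consecutive fan tops are joined by an edge, they are never
both excluded, and the recursion for `t_k` gives `t_k = 1 ↔ (Odd k ↔ ell a (k - 1) allowed)`.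
In the top triangle `ell a (n - 1)` is the left base vertex iff `n` is odd, and when one base
vertex is `≡ 1/0` the other one is excluded.
-/

theorem _root_.List.IsChain.rel_of_mem_zip_tail {α : Type*} {R : α → α → Prop} {l : List α}
    (h : l.IsChain R) {x y : α} (hxy : (x, y) ∈ l.zip l.tail) : R x y := by
  induction l with
  | nil => simp at hxy
  | cons b l ih =>
    cases l with
    | nil => simp at hxy
    | cons c l =>
      rw [List.isChain_cons_cons] at h
      rw [List.tail_cons, List.zip_cons_cons, List.mem_cons] at hxy
      rcases hxy with hxy | hxy
      · simp only [Prod.mk.injEq] at hxy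
        exact hxy.1 ▸ hxy.2 ▸ h.1
      · exact ih h.2 hxy

theorem _root_.List.mem_of_mem_zip_tail {α : Type*} {l : List α} {x y : α}
    (hxy : (x, y) ∈ l.zip l.tail) : x ∈ l ∧ y ∈ l :=
  ⟨(List.of_mem_zip hxy).1, List.mem_of_mem_tail (List.of_mem_zip hxy).2⟩

theorem _root_.List.exists_mem_zip_tail_of_mem {α : Type*} {l : List α} {x : α} (hx : x ∈ l)
    (hlast : l.getLast? ≠ some x) : ∃ y, (x, y) ∈ l.zip l.tail := by
  induction l with
  | nil => simp at hx
  | cons b l ih =>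
    cases l with
    | nil => simp_all
    | cons c l =>
      rw [List.tail_cons, List.zip_cons_cons]
      rcases List.mem_cons.1 hx with rfl | hx
      · exact ⟨c, List.mem_cons_self⟩
      · obtain ⟨y, hy⟩ := ih hx (by simpa [List.getLast?_cons_cons] using hlast)
        exact ⟨y, List.mem_cons_of_mem _ hy⟩

theorem _root_.List.exists_mem_zip_tail_of_head_of_getLast {α : Type*} {P : α → Prop}
    {l : List α} {x y : α} (hx : l.head? = some x) (hy : l.getLast? = some y) (hPx : P x)
    (hPy : ¬ P y) : ∃ u v, (u, v) ∈ l.zip l.tail ∧ P u ∧ ¬ P v := by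
  induction l generalizing x with
  | nil => simp at hx
  | cons b l ih =>
    obtain rfl : b = x := by simpa using hx
    cases l with
    | nil => simp_all
    | cons c l =>
      rw [List.tail_cons, List.zip_cons_cons]
      by_cases hPc : P c
      · obtain ⟨u, v, huv, hu, hv⟩ := ih rfl (by simpa [List.getLast?_cons_cons] using hy) hPc
        exact ⟨u, v, List.mem_cons_of_mem _ huv, hu, hv⟩
      · exact ⟨b, c, List.mem_cons_self, hPx, hPc⟩

theorem mod_two_ne_of_odd_cross {x y : ℕ × ℕ} (h : Odd (x.1 * y.2 + y.1 * x.2)) :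
    (x.1 % 2, x.2 % 2) ≠ (y.1 % 2, y.2 % 2) := by
  obtain ⟨⟨r, s⟩, u, v⟩ := x, y
  simp only [Nat.odd_iff, ne_eq, Prod.mk.injEq] at h ⊢
  rintro ⟨hru, hsv⟩
  rw [Nat.add_mod, Nat.mul_mod, Nat.mul_mod u, ← hru, ← hsv] at h
  rcases Nat.mod_two_eq_zero_or_one r with h1 | h1 <;>
    rcases Nat.mod_two_eq_zero_or_one s with h2 | h2 <;> simp [h1, h2] at h

theorem mod_two_eq_of_odd_cross {x y : ℕ × ℕ} (h : Odd (x.1 * y.2 + y.1 * x.2))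
    {c : ℕ × ℕ} (hc : c = (0, 1) ∨ c = (1, 1) ∨ c = (1, 0)) :
    (x.1 % 2, x.2 % 2) = c ∨ (y.1 % 2, y.2 % 2) = c ∨ ((x + y).1 % 2, (x + y).2 % 2) = c := by
  obtain ⟨⟨r, s⟩, u, v⟩ := x, y
  simp only [Nat.odd_iff, Prod.fst_add, Prod.snd_add] at h ⊢
  rw [Nat.add_mod, Nat.mul_mod, Nat.mul_mod u] at h
  rw [Nat.add_mod r, Nat.add_mod s]
  rcases Nat.mod_two_eq_zero_or_one r with h1 | h1 <;>
    rcases Nat.mod_two_eq_zero_or_one s with h2 | h2 <;>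
    rcases Nat.mod_two_eq_zero_or_one u with h3 | h3 <;>
    rcases Nat.mod_two_eq_zero_or_one v with h4 | h4 <;>
    rcases hc with rfl | rfl | rfl <;> simp_all

section

variable {a γ : List ℕ}

theorem ell_mono (a : List ℕ) : Monotone (ell a) := List.monotone_sum_take a

theorem ell_zero (a : List ℕ) : ell a 0 = 0 := rfl

theorem ell_length (a : List ℕ) : ell a a.length = a.sum := by
  simp [ell]

theorem ell_strictMonoOn (hpos : ∀ x ∈ a, 0 < x) : StrictMonoOn (ell a) (Set.Iic a.length) :=
  strictMonoOn_Iic_of_lt_succ fun k hk => by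
    rw [Order.succ_eq_add_one, ell, ell, List.sum_take_succ _ _ hk]
    have := hpos _ (List.getElem_mem hk)
    omega

theorem ell_lt_ell (hpos : ∀ x ∈ a, 0 < x) {j k : ℕ} (hjk : j < k) (hk : k ≤ a.length) :
    ell a j < ell a k :=
  ell_strictMonoOn hpos (Set.mem_Iic.2 (hjk.le.trans hk)) (Set.mem_Iic.2 hk) hjk

theorem fanIdx_eq {i k : ℕ} (hk : 1 ≤ k) (hlo : ell a (k - 1) ≤ i) (hhi : i < ell a k) :
    fanIdx a i = k := by
  refine le_antisymm (Nat.sInf_le hhi) ?_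
  by_contra! hlt
  have hmem : i < ell a (fanIdx a i) := Nat.sInf_mem (s := {m | i < ell a m}) ⟨k, hhi⟩
  have := ell_mono a (show fanIdx a i ≤ k - 1 by omega)
  omega

theorem exists_fan_of_lt_sum {i : ℕ} (hi : i < a.sum) :
    ∃ k, 1 ≤ k ∧ k ≤ a.length ∧ ell a (k - 1) ≤ i ∧ i < ell a k := by
  have htop : i < ell a a.length := by rwa [ell_length]
  have hmem : i < ell a (fanIdx a i) := Nat.sInf_mem (s := {m | i < ell a m}) ⟨_, htop⟩
  have hk : 1 ≤ fanIdx a i := Nat.one_le_iff_ne_zero.2 fun h0 => by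
    rw [h0, ell_zero] at hmem
    omega
  exact ⟨fanIdx a i, hk, Nat.sInf_le htop,
    not_lt.1 (Nat.notMem_of_lt_sInf (s := {m | i < ell a m}) (Nat.sub_lt hk one_pos)), hmem⟩

-- `edgeIdx a i` is the edge created by `T_i`, which lies in `Fan_k`; for `k = 1` also `i = 0`.
theorem edgeIdx_of_mem_fan (hpos : ∀ x ∈ a, 0 < x) {i k : ℕ} (hk : 1 ≤ k)
    (hkn : k ≤ a.length) (hlo : ell a (k - 1) ≤ i) (hhi : i < ell a k) :
    edgeIdx a i = if Odd k then (ell a (k - 1), i + 1) else (i + 1, ell a (k - 1)) := by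
  induction i generalizing k with
  | zero =>
    obtain rfl : k = 1 := by
      by_contra hk1
      have := ell_lt_ell hpos (j := 0) (k := k - 1) (by omega) (by omega)
      rw [ell_zero] at this
      omega
    simp [edgeIdx, ell_zero]
  | succ i ih =>
    have hright : isRight a (i + 1) ↔ Odd k := by rw [isRight, fanIdx_eq hk hlo hhi]
    rcases hlo.lt_or_eq with hlt | heq
    · rw [edgeIdx, ih hk hkn (by omega) (by omega)]
      by_cases hodd : Odd k <;> simp [hright, hodd]
    · obtain ⟨m, rfl⟩ : ∃ m, k = m + 2 := ⟨k - 2, by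
        have : k ≠ 1 := by rintro rfl; simp [ell_zero] at heq
        omega⟩
      have hstep := ell_lt_ell hpos (j := m) (k := m + 1) (by omega) (by omega)
      rw [show m + 2 - 1 = m + 1 from rfl] at heq ⊢
      rw [edgeIdx, ih (k := m + 1) (by omega) (by omega) (by simp; omega) (by omega)]
      simp only [hright, heq]
      by_cases hodd : Odd m <;> simp [hodd, Nat.odd_add_one]

theorem edgeIdx_ell_sub_one (hpos : ∀ x ∈ a, 0 < x) {k : ℕ} (hk : 1 ≤ k)
    (hkn : k ≤ a.length) :
    edgeIdx a (ell a k - 1) =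
      if Odd k then (ell a (k - 1), ell a k) else (ell a k, ell a (k - 1)) := by
  have hlt := ell_lt_ell hpos (j := k - 1) (k := k) (by omega) hkn
  rw [edgeIdx_of_mem_fan hpos hk hkn (by omega) (by omega), Nat.sub_add_cancel (by omega)]

theorem ell_sub_one_eq_edgeIdx (hpos : ∀ x ∈ a, 0 < x) {k : ℕ} (hk : 1 ≤ k)
    (hkn : k ≤ a.length) (h2 : 2 ≤ ell a k) :
    ell a (k - 1) =
      if Odd k then (edgeIdx a (ell a k - 2)).1 else (edgeIdx a (ell a k - 2)).2 := by
  have hlt := ell_lt_ell hpos (j := k - 1) (k := k) (by omega) hkn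
  have htop := edgeIdx_ell_sub_one hpos hk hkn
  have hright : isRight a (ell a k - 2 + 1) ↔ Odd k := by
    rw [isRight, fanIdx_eq hk (by omega) (by omega)]
  rw [show ell a k - 1 = ell a k - 2 + 1 by omega, edgeIdx, if_congr hright rfl rfl] at htop
  by_cases hodd : Odd k <;> simp_all [Prod.ext_iff]

theorem edgeIdx_lt (a : List ℕ) (i : ℕ) :
    (edgeIdx a i).1 < i + 2 ∧ (edgeIdx a i).2 < i + 2 := by
  induction i with
  | zero => simp [edgeIdx]
  | succ i ih =>
    rw [edgeIdx]
    split_ifs <;> simp only <;> omega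

theorem vtxLabel_add_two (a : List ℕ) (i : ℕ) :
    vtxLabel a (i + 2) = ((edgeLbl a i).1.1 + (edgeLbl a i).2.1,
      (edgeLbl a i).1.2 + (edgeLbl a i).2.2) := by
  simp [vtxLabel]

theorem edgeLbl_eq (a : List ℕ) (i : ℕ) :
    edgeLbl a i = (vtxLabel a (edgeIdx a i).1, vtxLabel a (edgeIdx a i).2) := by
  induction i with
  | zero => simp [edgeLbl, edgeIdx, vtxLabel]
  | succ i ih =>
    rw [edgeLbl, edgeIdx]
    split_ifs <;> simp [ih, vtxLabel_add_two]

theorem vtxLabel_apex (a : List ℕ) (i : ℕ) :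
    vtxLabel a (i + 2) = vtxLabel a (edgeIdx a i).1 + vtxLabel a (edgeIdx a i).2 := by
  rw [vtxLabel_add_two, edgeLbl_eq]
  rfl

-- The determinant `±1` of adjacent labels, read mod 2.
theorem odd_cross_edgeLbl (a : List ℕ) (i : ℕ) :
    Odd ((edgeLbl a i).1.1 * (edgeLbl a i).2.2 + (edgeLbl a i).2.1 * (edgeLbl a i).1.2) := by
  induction i with
  | zero => simp [edgeLbl]
  | succ i ih =>
    rw [edgeLbl]
    generalize edgeLbl a i = e at ih ⊢
    obtain ⟨⟨r, s⟩, u, v⟩ := e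
    split_ifs
    · convert ih.add_even (even_two_mul (r * s)) using 1
      dsimp only
      ring
    · convert ih.add_even (even_two_mul (u * v)) using 1
      dsimp only
      ring

theorem one_le_vtxLabel_snd (a : List ℕ) (v : ℕ) : 1 ≤ (vtxLabel a v).2 := by
  induction v using Nat.strong_induction_on with
  | _ v ih =>
    rcases lt_or_ge v 2 with hv | hv
    · interval_cases v <;> simp [vtxLabel]
    · obtain ⟨i, rfl⟩ : ∃ i, v = i + 2 := ⟨v - 2, by omega⟩
      have := ih _ (edgeIdx_lt a i).1
      rw [vtxLabel_apex, Prod.snd_add]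
      omega

theorem vtxLabel_snd_lt_apex (a : List ℕ) {i x : ℕ}
    (hx : x = (edgeIdx a i).1 ∨ x = (edgeIdx a i).2) :
    (vtxLabel a x).2 < (vtxLabel a (i + 2)).2 := by
  have h1 := one_le_vtxLabel_snd a (edgeIdx a i).1
  have h2 := one_le_vtxLabel_snd a (edgeIdx a i).2
  rw [vtxLabel_apex, Prod.snd_add]
  rcases hx with rfl | rfl <;> omega

theorem IsStep.mem_base {u w : ℕ} (h : IsStep a u w) :
    2 ≤ u ∧ (w = (edgeIdx a (u - 2)).1 ∨ w = (edgeIdx a (u - 2)).2) := by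
  obtain ⟨hedge, hden⟩ := h
  rcases hedge with ⟨rfl, rfl⟩ | ⟨rfl, rfl⟩ | hbase | ⟨hw, hu⟩
  · simp [vtxLabel] at hden
  · simp [vtxLabel] at hden
  · exact hbase
  · have := vtxLabel_snd_lt_apex a hu
    rw [Nat.sub_add_cancel hw] at this
    omega

theorem IsStep.lt {u w : ℕ} (h : IsStep a u w) : w < u := by
  obtain ⟨hu, hw⟩ := h.mem_base
  have := edgeIdx_lt a (u - 2)
  omega

theorem par2_edgeIdx_fst_ne_snd (a : List ℕ) (i : ℕ) :
    par2 a (edgeIdx a i).1 ≠ par2 a (edgeIdx a i).2 :=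
  mod_two_ne_of_odd_cross (by simpa [edgeLbl_eq] using odd_cross_edgeLbl a i)

theorem par2_triangle (a : List ℕ) (i : ℕ) {c : ℕ × ℕ}
    (hc : c = (0, 1) ∨ c = (1, 1) ∨ c = (1, 0)) :
    par2 a (edgeIdx a i).1 = c ∨ par2 a (edgeIdx a i).2 = c ∨ par2 a (i + 2) = c := by
  rw [par2, par2, par2, vtxLabel_apex]
  exact mod_two_eq_of_odd_cross (by simpa [edgeLbl_eq] using odd_cross_edgeLbl a i) hc

theorem par2_zero (a : List ℕ) : par2 a 0 = (0, 1) := by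
  simp [par2, vtxLabel]

theorem par2_one (a : List ℕ) : par2 a 1 = (1, 1) := by
  simp [par2, vtxLabel]

def excludedClass (a : List ℕ) : ℕ × ℕ := if par2 a a.sum = (1, 1) then (0, 1) else (1, 1)

def IsAllowed (a : List ℕ) (v : ℕ) : Prop := par2 a v ≠ excludedClass a

theorem excludedClass_eq (a : List ℕ) :
    excludedClass a = (0, 1) ∨ excludedClass a = (1, 1) := by
  unfold excludedClass
  split_ifs <;> simp

theorem isAllowed_sum (a : List ℕ) : IsAllowed a a.sum := by
  unfold IsAllowed excludedClass
  split_ifs with h <;> simp [h]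

theorem isAllowed_of_par2_eq {v : ℕ} (h : par2 a v = (1, 0)) : IsAllowed a v := by
  rcases excludedClass_eq a with he | he <;> simp [IsAllowed, h, he]

theorem isAllowed_fst_or_snd (a : List ℕ) (i : ℕ) :
    IsAllowed a (edgeIdx a i).1 ∨ IsAllowed a (edgeIdx a i).2 := by
  unfold IsAllowed
  by_contra! h
  exact par2_edgeIdx_fst_ne_snd a i (h.1.trans h.2.symm)

theorem not_isAllowed_fst_or_snd_or_apex (a : List ℕ) (i : ℕ) :
    ¬ IsAllowed a (edgeIdx a i).1 ∨ ¬ IsAllowed a (edgeIdx a i).2 ∨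
      ¬ IsAllowed a (i + 2) := by
  simp only [IsAllowed, not_not]
  exact par2_triangle a i (by rcases excludedClass_eq a with h | h <;> simp [h])

theorem not_isAllowed_snd_of_par2_fst {i : ℕ} (hapex : IsAllowed a (i + 2))
    (h : par2 a (edgeIdx a i).1 = (1, 0)) : ¬ IsAllowed a (edgeIdx a i).2 := by
  have := isAllowed_of_par2_eq h
  have := not_isAllowed_fst_or_snd_or_apex a i
  tauto

theorem not_isAllowed_fst_of_par2_snd {i : ℕ} (hapex : IsAllowed a (i + 2))
    (h : par2 a (edgeIdx a i).2 = (1, 0)) : ¬ IsAllowed a (edgeIdx a i).1 := by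
  have := isAllowed_of_par2_eq h
  have := not_isAllowed_fst_or_snd_or_apex a i
  tauto

theorem SeifertParity.isChain_isAllowed (h : SeifertParity a γ) :
    γ.IsChain fun u w => IsAllowed a u ∧ IsAllowed a w := by
  unfold SeifertParity at h
  split_ifs at h with htop <;> refine h.imp fun u w huw => ?_ <;>
    simp only [IsAllowed, excludedClass, htop, if_true, if_false] <;>
    rcases huw with ⟨hu, hw⟩ | ⟨hu, hw⟩ <;> simp [hu, hw]

theorem IsPathFrom.le_of_mem {s : ℕ} (h : IsPathFrom a s γ) {v : ℕ} (hv : v ∈ γ) :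
    v ≤ s := by
  obtain ⟨hhead, -, hsteps⟩ := h
  obtain ⟨t, rfl⟩ := List.head?_eq_some_iff.1 hhead
  have hdesc : (s :: t).Pairwise (· > ·) := (hsteps.imp fun _ _ h => h.lt).pairwise
  rcases List.mem_cons.1 hv with rfl | hv
  · exact le_rfl
  · exact (List.rel_of_pairwise_cons hdesc hv).le

theorem eq_of_mem_zip_tail_of_isAllowed (hsteps : γ.IsChain (IsStep a))
    (hpar : SeifertParity a γ) {v w x : ℕ} (hvw : (v, w) ∈ γ.zip γ.tail)
    (hx : x = (edgeIdx a (v - 2)).1 ∨ x = (edgeIdx a (v - 2)).2) (hxa : IsAllowed a x) :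
    w = x := by
  obtain ⟨hv, hw⟩ := (hsteps.rel_of_mem_zip_tail hvw).mem_base
  obtain ⟨hva, hwa⟩ := hpar.isChain_isAllowed.rel_of_mem_zip_tail hvw
  obtain ⟨i, rfl⟩ : ∃ i, v = i + 2 := ⟨v - 2, by omega⟩
  rw [Nat.add_sub_cancel] at hx hw
  by_contra hne
  have := not_isAllowed_fst_or_snd_or_apex a i
  rcases hx with rfl | rfl <;> rcases hw with rfl | rfl <;> tauto

theorem ell_mem_of_isAllowed (hpos : ∀ x ∈ a, 0 < x) (hpath : IsPathFrom a a.sum γ)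
    (hpar : SeifertParity a γ) {j : ℕ} (hj : 1 ≤ j) (hjn : j < a.length)
    (hja : IsAllowed a (ell a j)) : ell a j ∈ γ := by
  have ⟨hhead, hlast, hsteps⟩ := hpath
  have hbelow := ell_lt_ell hpos hjn le_rfl
  have habove := ell_lt_ell hpos hj hjn.le
  rw [ell_length] at hbelow
  rw [ell_zero] at habove
  obtain ⟨y, hy, hy1⟩ : ∃ y, γ.getLast? = some y ∧ y ≤ 1 := by
    rcases hlast with h | h <;> exact ⟨_, h, by omega⟩
  -- `(v, w)` is the step on which `γ` drops to `ell a j` or below.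
  obtain ⟨v, w, hvw, hv, hw⟩ := List.exists_mem_zip_tail_of_head_of_getLast
    (P := (ell a j < ·)) hhead hy hbelow (by omega)
  simp only [not_lt] at hv hw
  obtain ⟨hv2, hwbase⟩ := (hsteps.rel_of_mem_zip_tail hvw).mem_base
  have hvs := hpath.le_of_mem (List.mem_of_mem_zip_tail hvw).1
  obtain ⟨k, hk, hkn, hlo, hhi⟩ := exists_fan_of_lt_sum (a := a) (i := v - 2) (by omega)
  have hbase := edgeIdx_of_mem_fan hpos hk hkn hlo hhi
  rw [show v - 2 + 1 = v - 1 by omega] at hbase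
  have hjk : j ≤ k := by
    by_contra! hkj
    have := ell_lt_ell hpos hkj hjn.le
    omega
  suffices w = ell a j from this ▸ (List.mem_of_mem_zip_tail hvw).2
  rw [hbase] at hwbase
  rcases hjk.lt_or_eq with hjk | rfl
  · have := ell_mono a (Nat.le_sub_one_of_lt hjk)
    split_ifs at hwbase <;> omega
  · have hvj : v - 1 = ell a j := by omega
    refine eq_of_mem_zip_tail_of_isAllowed hsteps hpar hvw ?_ hja
    rw [hbase, ← hvj]
    split_ifs <;> simp

theorem bottomEdgeOn_iff_onPath (hpos : ∀ x ∈ a, 0 < x) {k : ℕ} (hk : 2 ≤ k)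
    (hkn : k ≤ a.length) : bottomEdgeOn a γ k ↔ onPath γ (ell a (k - 1)) (ell a (k - 2)) := by
  have htop := edgeIdx_ell_sub_one hpos (k := k - 1) (by omega) (by omega)
  rw [show k - 1 - 1 = k - 2 by omega] at htop
  change onPath γ (edgeIdx a (ell a (k - 1) - 1)).1 (edgeIdx a (ell a (k - 1) - 1)).2 ↔ _
  rw [htop]
  split_ifs
  · exact Or.comm
  · exact Iff.rfl

theorem bottomEdgeOn_iff (hpos : ∀ x ∈ a, 0 < x) (hpath : IsPathFrom a a.sum γ)
    (hpar : SeifertParity a γ) {k : ℕ} (hk : 2 ≤ k) (hkn : k ≤ a.length) :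
    bottomEdgeOn a γ k ↔ IsAllowed a (ell a (k - 1)) ∧ IsAllowed a (ell a (k - 2)) := by
  rw [bottomEdgeOn_iff_onPath hpos hk hkn]
  have ⟨_, hlast, hsteps⟩ := hpath
  have hallowed := hpar.isChain_isAllowed
  constructor
  · rintro (h | h)
    · exact hallowed.rel_of_mem_zip_tail h
    · exact (hallowed.rel_of_mem_zip_tail h).symm
  · rintro ⟨h1, h2⟩
    have hlt := ell_lt_ell hpos (j := k - 2) (k := k - 1) (by omega) (by omega)
    have hmem := ell_mem_of_isAllowed hpos hpath hpar (j := k - 1) (by omega) (by omega) h1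
    have h2le : 2 ≤ ell a (k - 1) := by
      by_contra! hlt2
      rw [show ell a (k - 1) = 1 by omega] at h1
      rw [show ell a (k - 2) = 0 by omega] at h2
      rcases excludedClass_eq a with he | he <;> simp [IsAllowed, he, par2_zero, par2_one] at h1 h2
    obtain ⟨w, hw⟩ := List.exists_mem_zip_tail_of_mem hmem (by
      rcases hlast with h | h <;> rw [h] <;> simp <;> omega)
    have hbase := ell_sub_one_eq_edgeIdx hpos (k := k - 1) (by omega) (by omega) h2le
    rw [show k - 1 - 1 = k - 2 by omega] at hbase
    have hwk := eq_of_mem_zip_tail_of_isAllowed hsteps hpar hw (x := ell a (k - 2))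
      (by rw [hbase]; split_ifs <;> simp) h2
    exact Or.inl (hwk ▸ hw)

theorem isAllowed_ell_sub_one_or (hpos : ∀ x ∈ a, 0 < x) {k : ℕ} (hk : 1 ≤ k)
    (hkn : k ≤ a.length) : IsAllowed a (ell a (k - 1)) ∨ IsAllowed a (ell a k) := by
  have := isAllowed_fst_or_snd a (ell a k - 1)
  rw [edgeIdx_ell_sub_one hpos hk hkn] at this
  split_ifs at this <;> tauto

theorem tsgn_eq (hpos : ∀ x ∈ a, 0 < x) (hpath : IsPathFrom a a.sum γ)
    (hpar : SeifertParity a γ) :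
    ∀ {k : ℕ}, 1 ≤ k → k ≤ a.length →
      tsgn a γ k = if (Odd k ↔ IsAllowed a (ell a (k - 1))) then 1 else -1
  | 0, hk, _ => absurd hk (by omega)
  | 1, _, _ => by
    unfold tsgn IsAllowed excludedClass
    by_cases h : par2 a a.sum = (1, 1) <;> simp [h, ell_zero, par2_zero]
  | k + 2, _, hkn => by
    rw [tsgn, tsgn_eq hpos hpath hpar (k := k + 1) (by omega) (by omega),
      bottomEdgeOn_iff hpos hpath hpar (by omega) hkn]
    have hor := isAllowed_ell_sub_one_or hpos (k := k + 1) (by omega) (by omega)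
    simp only [Nat.add_sub_cancel, show k + 2 - 1 = k + 1 from rfl, show k + 2 - 2 = k from rfl]
      at hor ⊢
    by_cases h1 : IsAllowed a (ell a k) <;> by_cases h2 : IsAllowed a (ell a (k + 1)) <;>
      by_cases ho : Odd k <;> simp_all [Nat.odd_add_one]

end

theorem sign_formula_general (a : List ℕ)
    (hpos : ∀ x ∈ a, 0 < x)
    (γ : List ℕ) (hγ : IsSeifert a γ) :
    (par2 a (edgeIdx a (a.sum - 2)).1 = (1, 0) → tsgn a γ a.length = 1) ∧
    (par2 a (edgeIdx a (a.sum - 2)).2 = (1, 0) → tsgn a γ a.length = -1) := by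
  obtain ⟨hpath, -, hpar⟩ := hγ
  rcases lt_or_ge a.sum 2 with hsum | hsum
  -- `a.sum - 2` truncates to `0`: the base is the edge `0/1`–`1/1`, with no vertex `≡ 1/0`.
  · rw [show a.sum - 2 = 0 by omega]
    simp [edgeIdx, par2_zero, par2_one]
  have hn : 1 ≤ a.length := List.length_pos_iff.2 (by rintro rfl; simp at hsum)
  have hpivot := ell_sub_one_eq_edgeIdx hpos hn le_rfl (by rwa [ell_length])
  have hapex : IsAllowed a (a.sum - 2 + 2) := by
    rw [Nat.sub_add_cancel hsum]
    exact isAllowed_sum a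
  rw [ell_length] at hpivot
  rw [tsgn_eq hpos hpath hpar hn le_rfl]
  constructor <;> intro h10 <;> split_ifs at hpivot with hodd <;> rw [hpivot]
  · simp [hodd, isAllowed_of_par2_eq h10]
  · simp [hodd, not_isAllowed_snd_of_par2_fst hapex h10]
  · simp [hodd, not_isAllowed_fst_of_par2_snd hapex h10]
  · simp [hodd, isAllowed_of_par2_eq h10]

/-- **Corollary (sign of the last braid).**  Let `p/q = [a₁,…,aₙ]` be an irreducible
fraction with `0 < p/q < 1` such that `p/q ≡ 1/1` or `0/1 (mod 2)` (i.e. `p` and `q` are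
both odd, or `p` is even and `q` is odd).  Then `t_n = +1` if the left vertex of the top
triangle `T_N` of `AT(p/q)` has label `≡ 1/0 (mod 2)`, and `t_n = −1` if the right vertex
of the top triangle has label `≡ 1/0 (mod 2)`.  (The top triangle's base edge is
`edgeIdx a (N − 1)`, where `N = a.sum − 1`.) -/
theorem sign_formula (a : List ℕ) (p q : ℕ)
    (hpos : ∀ x ∈ a, 0 < x) (hne : a ≠ [])
    (hp : 0 < p) (hlt : p < q) (hcop : Nat.Coprime p q)
    (hval : cf a = (p : ℚ) / q)
    (hpar : (p % 2 = 1 ∧ q % 2 = 1) ∨ (p % 2 = 0 ∧ q % 2 = 1))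
    (γ : List ℕ) (hγ : IsSeifert a γ) :
    (par2 a (edgeIdx a (a.sum - 2)).1 = (1, 0) → tsgn a γ a.length = 1) ∧
    (par2 a (edgeIdx a (a.sum - 2)).2 = (1, 0) → tsgn a γ a.length = -1) :=
  sign_formula_general a hpos γ hγ

end TwoBridge

end
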